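/- arXiv:1611.04088 — 5 statements merged into one kernel-verified Lean document; each statement's English description precedes it below -/
import Mathlib

section
/- Let X be a finite nonempty set, let μ : X → ℝ and σ : X → ℝ be functions with σ(x) > 0 for all x ∈ X, and let m̂ ∈ ℝ. Define β½ = min_{x ∈ X} (m̂ − μ(x))/σ(x). Then every point x* ∈ X that minimizes the function x ↦ (m̂ − μ(x))/σ(x) over X also maximizes the function x ↦ μ(x) + β½·σ(x) over X. (Deterministic form of the paper's Lemma 3.1: at any timestep the point selected by EST coincides with the point selected by a variant of UCB with β_t^{1/2} = min_x (m̂ − μ_{t−1}(x))/σ_{t−1}(x).) -/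
/-- Deterministic form of the paper's Lemma 3.1: on a finite nonempty set `X`,
with `σ > 0` pointwise and `β½ = min_x (mhat - μ x) / σ x`, every minimizer of
`x ↦ (mhat - μ x)/σ x` is a maximizer of `x ↦ μ x + β½ * σ x`. -/
theorem est_ucb_equivalence {X : Type*} [Fintype X] [Nonempty X]
    (μ σ : X → ℝ) (hσ : ∀ x, 0 < σ x) (mhat : ℝ) (β : ℝ)
    (hβ : β = Finset.univ.inf' Finset.univ_nonempty (fun x => (mhat - μ x) / σ x))
    (xstar : X) (hmin : ∀ x : X, (mhat - μ xstar) / σ xstar ≤ (mhat - μ x) / σ x) :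
    ∀ x : X, μ x + β * σ x ≤ μ xstar + β * σ xstar := by
  have hβeq : β = (mhat - μ xstar) / σ xstar := by
    rw [hβ]
    apply le_antisymm
    · exact Finset.inf'_le _ (Finset.mem_univ xstar)
    · exact Finset.le_inf' _ _ fun x _ => hmin x
  have hstar : μ xstar + β * σ xstar = mhat := by
    rw [hβeq]
    rw [div_mul_cancel₀ _ (hσ xstar).ne']
    ring
  intro x
  rw [hstar]
  have hβle : β ≤ (mhat - μ x) / σ x := by
    rw [hβ]; exact Finset.inf'_le _ (Finset.mem_univ x)
  have := (le_div_iff₀ (hσ x)).mp hβle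
  linarith
end

section
/- Let d ≥ 1 be an integer, let c > 0, σ > 0, and 0 < B < 1. Suppose (λ_t)_{t ≥ 1} is a sequence of real numbers with 0 ≤ λ_t ≤ c·B^{t^{1/d}} for all t ≥ 1. Then there exists a constant C > 0 (depending only on c, σ, B, d) such that for all integers n ≥ 2, Σ_{t=1}^{n} log(1 + σ⁻²·λ_t) ≤ C·(log n)^d. (Abstract form of the appendix theorem: the maximum information gain for the RBF kernel after n timesteps is O((log n)^d), improving the previous O((log n)^{d+1}) bound, under Seeger et al.'s eigenvalue decay bound λ_t(K) ≤ c·B^{t^{1/d}}.) -/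
/-- Abstract form of the appendix information-gain bound for the RBF kernel:
if `0 ≤ λ_t ≤ c · B^(t^(1/d))` for all `t ≥ 1` (Seeger et al.'s eigenvalue decay),
then there is a constant `C > 0` with
`∑_{t=1}^n log(1 + σ⁻² λ_t) ≤ C · (log n)^d` for all `n ≥ 2`. -/
theorem information_gain_rbf (d : ℕ) (hd : 1 ≤ d) (c σ B : ℝ)
    (hc : 0 < c) (hσ : 0 < σ) (hB0 : 0 < B) (hB1 : B < 1)
    (lam : ℕ → ℝ)
    (hlam : ∀ t : ℕ, 1 ≤ t → 0 ≤ lam t ∧ lam t ≤ c * B ^ ((t : ℝ) ^ (1 / (d : ℝ)))) :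
    ∃ C : ℝ, 0 < C ∧ ∀ n : ℕ, 2 ≤ n →
      ∑ t ∈ Finset.Icc 1 n, Real.log (1 + (σ ^ 2)⁻¹ * lam t)
        ≤ C * (Real.log n) ^ d := by
  set a : ℝ := -Real.log B with ha_def
  have ha : 0 < a := by
    have := Real.log_neg hB0 hB1
    simpa [ha_def] using this
  set M : ℝ := ((2 * d).factorial : ℝ) / a ^ (2 * d) with hM_def
  have hM : 0 < M := div_pos (by positivity) (by positivity)
  -- key pointwise bound: B ^ (t^(1/d)) ≤ M / t^2 for t ≥ 1
  have key : ∀ t : ℕ, 1 ≤ t → B ^ ((t : ℝ) ^ (1 / (d : ℝ))) ≤ M / (t : ℝ) ^ 2 := by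
    intro t ht
    have ht0 : (0 : ℝ) < t := by exact_mod_cast ht
    have ht1 : (1 : ℝ) ≤ t := by exact_mod_cast ht
    set y : ℝ := (t : ℝ) ^ (1 / (d : ℝ)) with hy_def
    have hy0 : 0 ≤ y := Real.rpow_nonneg ht0.le _
    have hBrw : B ^ y = Real.exp (-(a * y)) := by
      rw [Real.rpow_def_of_pos hB0, ha_def]
      ring_nf
    have hyd : y ^ (2 * d) = (t : ℝ) ^ 2 := by
      have hd0 : (d : ℝ) ≠ 0 := by positivity
      rw [hy_def, ← Real.rpow_natCast ((t:ℝ) ^ (1 / (d:ℝ))) (2 * d),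
        ← Real.rpow_mul ht0.le]
      have : 1 / (d : ℝ) * ((2 * d : ℕ) : ℝ) = 2 := by
        push_cast; field_simp
      rw [this]
      norm_num [Real.rpow_two]
    have hexp : a ^ (2 * d) * (t : ℝ) ^ 2 / ((2 * d).factorial : ℝ) ≤ Real.exp (a * y) := by
      have h := Real.pow_div_factorial_le_exp (x := a * y) (by positivity) (2 * d)
      calc a ^ (2 * d) * (t : ℝ) ^ 2 / ((2 * d).factorial : ℝ)
          = (a * y) ^ (2 * d) / ((2 * d).factorial : ℝ) := by rw [mul_pow, hyd]
        _ ≤ Real.exp (a * y) := h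
    rw [hBrw, Real.exp_neg]
    rw [inv_le_iff_one_le_mul₀ (Real.exp_pos _)]
    have hfact : (0:ℝ) < ((2 * d).factorial : ℝ) := by positivity
    have hone : M / (t : ℝ) ^ 2 * (a ^ (2 * d) * (t : ℝ) ^ 2 / ((2 * d).factorial : ℝ)) = 1 := by
      rw [hM_def]; field_simp
    calc (1 : ℝ) = M / (t : ℝ) ^ 2 * (a ^ (2 * d) * (t : ℝ) ^ 2 / ((2 * d).factorial : ℝ)) :=
          hone.symm
      _ ≤ M / (t : ℝ) ^ 2 * Real.exp (a * y) := by
          have : 0 ≤ M / (t : ℝ) ^ 2 := by positivity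
          exact mul_le_mul_of_nonneg_left hexp this
  -- summability of 1/t^2
  have hsummable : Summable (fun t : ℕ => 1 / (t : ℝ) ^ 2) := by
    exact Real.summable_one_div_nat_pow.mpr (by norm_num : 1 < 2)
  set T : ℝ := ∑' t : ℕ, 1 / (t : ℝ) ^ 2 with hT_def
  have hT0 : 0 ≤ T := tsum_nonneg fun t => by positivity
  set K : ℝ := (σ ^ 2)⁻¹ * c * M * T + 1 with hK_def
  have hK : 0 < K := by
    have h0 : 0 ≤ (σ ^ 2)⁻¹ * c * M * T :=
      mul_nonneg (mul_nonneg (mul_nonneg (by positivity) hc.le) hM.le) hT0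
    rw [hK_def]; linarith
  have hlog2 : 0 < Real.log 2 := Real.log_pos (by norm_num)
  refine ⟨K / Real.log 2 ^ d, by positivity, fun n hn => ?_⟩
  have hsum_bound : ∑ t ∈ Finset.Icc 1 n, Real.log (1 + (σ ^ 2)⁻¹ * lam t)
      ≤ (σ ^ 2)⁻¹ * c * M * T := by
    calc ∑ t ∈ Finset.Icc 1 n, Real.log (1 + (σ ^ 2)⁻¹ * lam t)
        ≤ ∑ t ∈ Finset.Icc 1 n, (σ ^ 2)⁻¹ * c * M * (1 / (t : ℝ) ^ 2) := by
          apply Finset.sum_le_sum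
          intro t htmem
          have ht : 1 ≤ t := (Finset.mem_Icc.mp htmem).1
          obtain ⟨hl0, hlB⟩ := hlam t ht
          have hterm : Real.log (1 + (σ ^ 2)⁻¹ * lam t) ≤ (σ ^ 2)⁻¹ * lam t := by
            have h1 : (0:ℝ) < 1 + (σ ^ 2)⁻¹ * lam t := by positivity
            have := Real.log_le_sub_one_of_pos h1
            linarith
          have ht0 : (0:ℝ) < t := by exact_mod_cast ht
          have hlam_le : lam t ≤ c * (M / (t : ℝ) ^ 2) := by
            calc lam t ≤ c * B ^ ((t : ℝ) ^ (1 / (d : ℝ))) := hlB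
              _ ≤ c * (M / (t : ℝ) ^ 2) := by gcongr; exact key t ht
          calc Real.log (1 + (σ ^ 2)⁻¹ * lam t) ≤ (σ ^ 2)⁻¹ * lam t := hterm
            _ ≤ (σ ^ 2)⁻¹ * (c * (M / (t : ℝ) ^ 2)) := by gcongr
            _ = (σ ^ 2)⁻¹ * c * M * (1 / (t : ℝ) ^ 2) := by ring
      _ = (σ ^ 2)⁻¹ * c * M * ∑ t ∈ Finset.Icc 1 n, (1 / (t : ℝ) ^ 2) := by
          rw [Finset.mul_sum]
      _ ≤ (σ ^ 2)⁻¹ * c * M * T := by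
          gcongr
          exact Summable.sum_le_tsum _ (fun t _ => by positivity) hsummable
  have hlogn : Real.log 2 ≤ Real.log n :=
    Real.log_le_log (by norm_num) (by exact_mod_cast hn)
  have hpow : Real.log 2 ^ d ≤ Real.log n ^ d :=
    pow_le_pow_left₀ hlog2.le hlogn d
  calc ∑ t ∈ Finset.Icc 1 n, Real.log (1 + (σ ^ 2)⁻¹ * lam t)
      ≤ (σ ^ 2)⁻¹ * c * M * T := hsum_bound
    _ ≤ K := by
        have h0 : 0 ≤ (σ ^ 2)⁻¹ * c * M * T :=
          mul_nonneg (mul_nonneg (mul_nonneg (by positivity) hc.le) hM.le) hT0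
        rw [hK_def]; linarith
    _ = K / Real.log 2 ^ d * Real.log 2 ^ d := by field_simp
    _ ≤ K / Real.log 2 ^ d * Real.log n ^ d := by
        have : 0 ≤ K / Real.log 2 ^ d := by positivity
        exact mul_le_mul_of_nonneg_left hpow this
end

section
/- Let K be a real symmetric positive semidefinite matrix indexed by a finite set X, let σ > 0, let A ⊆ X, and let x ∈ X \ A. Then det(I + σ⁻²·K_{A∪{x}}) = det(I + σ⁻²·K_A) · (1 + σ⁻²·σ_A²(x)), where K_A and K_{A∪{x}} are the principal submatrices of K on A and A∪{x}. -/
/-- Posterior variance `σ_A²(x) = K x x − K(x,A) (K_A + σ² I)⁻¹ K(A,x)`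
(for `A = ∅` this is `K x x`). -/
noncomputable def postVar {X : Type*} [Fintype X] [DecidableEq X]
    (K : Matrix X X ℝ) (σ : ℝ) (A : Finset X) (x : X) : ℝ :=
  K x x - ∑ a : A, ∑ b : A,
    K x a * (K.submatrix (fun i : A => (i : X)) (fun j : A => (j : X)) +
      σ ^ 2 • (1 : Matrix A A ℝ))⁻¹ a b * K b x

/-- Schur determinant identity: for symmetric PSD `K`, `σ > 0`, `A ⊆ X`, `x ∉ A`,
`det(I + σ⁻² K_{A∪{x}}) = det(I + σ⁻² K_A) · (1 + σ⁻² σ_A²(x))`. -/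
theorem det_insert_eq_det_mul_one_add_postVar
    {X : Type*} [Fintype X] [DecidableEq X]
    (K : Matrix X X ℝ) (hK : K.PosSemidef) (σ : ℝ) (hσ : 0 < σ)
    (A : Finset X) (x : X) (hx : x ∉ A) :
    ((1 : Matrix (insert x A : Finset X) (insert x A : Finset X) ℝ) +
        (σ ^ 2)⁻¹ • K.submatrix (fun i : (insert x A : Finset X) => (i : X))
          (fun j : (insert x A : Finset X) => (j : X))).det
      = ((1 : Matrix A A ℝ) +
          (σ ^ 2)⁻¹ • K.submatrix (fun i : A => (i : X)) (fun j : A => (j : X))).det *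
        (1 + (σ ^ 2)⁻¹ * postVar K σ A x) := by
  classical
  set M : Matrix A A ℝ :=
    K.submatrix (fun i : A => (i : X)) (fun j : A => (j : X)) with hMdef
  set Q : Matrix A A ℝ := M + σ ^ 2 • (1 : Matrix A A ℝ) with hQdef
  have hσ2 : (0:ℝ) < σ ^ 2 := by positivity
  have hM : M.PosSemidef := hK.submatrix _
  have hs1 : (σ ^ 2 • (1 : Matrix A A ℝ)).PosDef := by
    have h : σ ^ 2 • (1 : Matrix A A ℝ) = Matrix.diagonal (fun _ => σ ^ 2) := by
      ext i j
      by_cases h : i = j <;> simp [Matrix.one_apply, Matrix.diagonal, h]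
    rw [h]
    exact Matrix.posDef_diagonal_iff.mpr fun _ => hσ2
  have hQ : Q.PosDef := Matrix.PosDef.posSemidef_add hM hs1
  haveI : Invertible Q := hQ.isUnit.invertible
  set P : Matrix A A ℝ := (1 : Matrix A A ℝ) + (σ ^ 2)⁻¹ • M with hPdef
  have hPQ : P = (σ ^ 2)⁻¹ • Q := by
    rw [hQdef, smul_add, smul_smul, inv_mul_cancel₀ hσ2.ne', one_smul, add_comm]
  have hPinv : P⁻¹ = σ ^ 2 • Q⁻¹ := by
    haveI : Invertible ((σ ^ 2)⁻¹ : ℝ) := invertibleOfNonzero (by positivity)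
    rw [hPQ, Matrix.inv_smul (A := Q) ((σ ^ 2)⁻¹) hQ.det_pos.ne'.isUnit, invOf_eq_inv, inv_inv]
  have hPdet : IsUnit P.det := by
    rw [hPQ, Matrix.det_smul]
    exact ((isUnit_iff_ne_zero.mpr (inv_ne_zero hσ2.ne')).pow _).mul hQ.det_pos.ne'.isUnit
  haveI : Invertible P := P.invertibleOfIsUnitDet hPdet
  let e : Unit ⊕ {a // a ∈ A} ≃ {y // y ∈ (insert x A : Finset X)} :=
    { toFun := fun i => match i with
        | Sum.inl _ => ⟨x, Finset.mem_insert_self x A⟩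
        | Sum.inr a => ⟨a.1, Finset.mem_insert_of_mem a.2⟩
      invFun := fun y => if h : (y : X) ∈ A then Sum.inr ⟨(y : X), h⟩ else Sum.inl ()
      left_inv := by
        rintro (⟨⟩ | a)
        · simp [hx]
        · simp [a.2]
      right_inv := by
        rintro ⟨y, hy⟩
        by_cases h : y ∈ A
        · simp [h]
        · have hyx : y = x := by
            rcases Finset.mem_insert.mp hy with h' | h'
            · exact h'
            · exact absurd h' h
          subst hyx
          simp [h] }
  rw [← Matrix.det_submatrix_equiv_self e]
  have hblock : ((1 : Matrix (insert x A : Finset X) (insert x A : Finset X) ℝ) +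
        (σ ^ 2)⁻¹ • K.submatrix (fun i : (insert x A : Finset X) => (i : X))
          (fun j : (insert x A : Finset X) => (j : X))).submatrix e e =
      Matrix.fromBlocks
        (Matrix.of fun (_ : Unit) (_ : Unit) => 1 + (σ ^ 2)⁻¹ * K x x)
        (Matrix.of fun (_ : Unit) (j : {a // a ∈ A}) => (σ ^ 2)⁻¹ * K x j)
        (Matrix.of fun (i : {a // a ∈ A}) (_ : Unit) => (σ ^ 2)⁻¹ * K i x) P := by
    ext i j
    cases i with
    | inl u =>
      cases j with
      | inl v =>
        simp [e, Matrix.one_apply]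
      | inr j =>
        have hxj : x ≠ (j : X) := fun h => hx (h ▸ j.2)
        simp [e, Matrix.one_apply, hxj]
    | inr i =>
      cases j with
      | inl v =>
        have hix : (i : X) ≠ x := fun h => hx (h ▸ i.2)
        simp [e, Matrix.one_apply, hix]
      | inr j =>
        rw [hPdef, hMdef]
        simp only [e, Matrix.submatrix_apply, Matrix.add_apply, Matrix.smul_apply, Matrix.fromBlocks_apply₂₂, Equiv.coe_fn_mk]
        congr 1
        by_cases h : i = j
        · subst h; simp
        · have h' : (i : X) ≠ j := fun h'' => h (Subtype.ext h'')
          simp [Matrix.one_apply, h, h']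
  rw [hblock, Matrix.det_fromBlocks₂₂, Matrix.invOf_eq_nonsing_inv, hPinv]
  congr 1
  rw [Matrix.det_unique]
  simp only [Matrix.sub_apply, Matrix.of_apply, Matrix.mul_apply, Matrix.smul_apply,
    smul_eq_mul, Finset.sum_mul]
  rw [Finset.sum_comm]
  unfold postVar
  rw [mul_sub, ← hMdef, ← hQdef, Finset.mul_sum]
  simp only [Finset.mul_sum]
  rw [add_sub_assoc]
  refine congrArg (1 + ·) (congrArg (fun t => (σ ^ 2)⁻¹ * K x x - t) ?_)
  refine Finset.sum_congr rfl fun a _ => Finset.sum_congr rfl fun b _ => ?_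
  have hne : (σ : ℝ) ≠ 0 := hσ.ne'
  field_simp
end

section
/- Let K be a real symmetric positive semidefinite matrix indexed by a finite set X, let σ > 0, and let x_1, …, x_k be distinct elements of X with S = {x_1, …, x_k}. Then det(I + σ⁻²·K_S) = Π_{j=1}^{k} (1 + σ⁻²·σ_{P_{j-1}}²(x_j)), where P_{j-1} = {x_1, …, x_{j-1}} (with P_0 = ∅) and K_S is the principal submatrix of K on S. In particular, the determinant of the regularized principal minor on S equals the product of (1 + σ⁻² times) the successively updated posterior variances along any ordering of S, which shows that greedily maximizing updated posterior variances (Pure Exploration) is the greedy algorithm for maximizing the determinant of the DPP kernel. -/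
section Aux

open Matrix Finset

set_option linter.unusedSectionVars false

variable {X : Type*} [Fintype X] [DecidableEq X]

/-- Equivalence between `Fin m` and the image of an injective map. -/
noncomputable def imgEquiv {m : ℕ} (z : Fin m → X) (hz : Function.Injective z) :
    Fin m ≃ (Finset.image z Finset.univ : Finset X) :=
  Equiv.ofBijective (fun a => ⟨z a, Finset.mem_image_of_mem z (Finset.mem_univ a)⟩)
    ⟨fun a b h => hz (Subtype.ext_iff.mp h), fun ⟨y, hy⟩ => by
      obtain ⟨a, -, rfl⟩ := Finset.mem_image.mp hy
      exact ⟨a, rfl⟩⟩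

@[simp] lemma imgEquiv_apply {m : ℕ} (z : Fin m → X) (hz : Function.Injective z) (a : Fin m) :
    (imgEquiv z hz a : X) = z a := rfl

lemma submatrix_coe_eq_reindex {m : ℕ} (K : Matrix X X ℝ) (σ : ℝ)
    (z : Fin m → X) (hz : Function.Injective z) :
    (K.submatrix (fun i : (Finset.image z Finset.univ : Finset X) => (i : X))
        (fun j : (Finset.image z Finset.univ : Finset X) => (j : X)) +
      σ ^ 2 • (1 : Matrix _ _ ℝ))
      = (Matrix.reindex (imgEquiv z hz) (imgEquiv z hz))
          (K.submatrix z z + σ ^ 2 • (1 : Matrix (Fin m) (Fin m) ℝ)) := by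
  ext i j
  have h1 : z ((imgEquiv z hz).symm i) = (i : X) :=
    congrArg Subtype.val ((imgEquiv z hz).apply_symm_apply i)
  have h2 : z ((imgEquiv z hz).symm j) = (j : X) :=
    congrArg Subtype.val ((imgEquiv z hz).apply_symm_apply j)
  simp only [Matrix.add_apply, Matrix.reindex_apply, Matrix.submatrix_apply, h1, h2,
    Matrix.smul_apply, Matrix.one_apply, (imgEquiv z hz).symm.injective.eq_iff]

lemma postVar_fin {m : ℕ} (K : Matrix X X ℝ) (σ : ℝ)
    (z : Fin m → X) (hz : Function.Injective z) (y : X) :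
    postVar K σ (Finset.image z Finset.univ) y
      = K y y - ∑ a : Fin m, ∑ b : Fin m,
          K y (z a) *
            (K.submatrix z z + σ ^ 2 • (1 : Matrix (Fin m) (Fin m) ℝ))⁻¹ a b * K (z b) y := by
  rw [postVar, submatrix_coe_eq_reindex K σ z hz, Matrix.inv_reindex]
  congr 1
  rw [← (imgEquiv z hz).sum_comp (ι := Fin m)]
  refine Finset.sum_congr rfl fun a _ => ?_
  rw [← (imgEquiv z hz).sum_comp (ι := Fin m)]
  refine Finset.sum_congr rfl fun b _ => ?_
  simp

lemma regPosDef {m : ℕ} (K : Matrix X X ℝ) (hK : K.PosSemidef) {σ : ℝ} (hσ : 0 < σ)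
    (z : Fin m → X) :
    (K.submatrix z z + σ ^ 2 • (1 : Matrix (Fin m) (Fin m) ℝ)).PosDef := by
  refine Matrix.PosDef.posSemidef_add (hK.submatrix z) ?_
  rw [Matrix.smul_one_eq_diagonal]
  exact Matrix.posDef_diagonal_iff.mpr fun _ => by positivity

lemma img_castSucc {k : ℕ} (x : Fin (k+1) → X) (j : Fin k) :
    Finset.image x (Finset.univ.filter (fun i => i < Fin.castSucc j))
      = Finset.image (x ∘ Fin.castSucc) (Finset.univ.filter (fun i => i < j)) := by
  ext y
  simp only [Finset.mem_image, Finset.mem_filter, Finset.mem_univ, true_and,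
    Function.comp_apply]
  constructor
  · rintro ⟨i, hi, rfl⟩
    have hik : (i : ℕ) < k :=
      lt_of_lt_of_le (Fin.lt_iff_val_lt_val.mp hi) (Nat.le_of_lt_succ j.castSucc.isLt)
    exact ⟨⟨i, hik⟩, Fin.lt_iff_val_lt_val.mpr (Fin.lt_iff_val_lt_val.mp hi),
      by simp [Fin.castSucc]⟩
  · rintro ⟨i, hi, rfl⟩
    exact ⟨Fin.castSucc i, Fin.castSucc_lt_castSucc_iff.mpr hi, rfl⟩

lemma img_last {k : ℕ} (x : Fin (k+1) → X) :
    Finset.image x (Finset.univ.filter (fun i => i < Fin.last k))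
      = Finset.image (x ∘ Fin.castSucc) Finset.univ := by
  ext y
  simp only [Finset.mem_image, Finset.mem_filter, Finset.mem_univ, true_and,
    Function.comp_apply]
  constructor
  · rintro ⟨i, hi, rfl⟩
    exact ⟨⟨i, Fin.lt_iff_val_lt_val.mp hi⟩, by simp [Fin.castSucc]⟩
  · rintro ⟨i, rfl⟩
    exact ⟨Fin.castSucc i, Fin.castSucc_lt_last i, rfl⟩

lemma det_key (K : Matrix X X ℝ) (hK : K.PosSemidef) {σ : ℝ} (hσ : 0 < σ) :
    ∀ (k : ℕ) (x : Fin k → X), Function.Injective x →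
    (K.submatrix x x + σ ^ 2 • (1 : Matrix (Fin k) (Fin k) ℝ)).det
      = ∏ j : Fin k, (σ ^ 2 +
          postVar K σ (Finset.image x (Finset.univ.filter (fun i => i < j))) (x j)) := by
  intro k
  induction k with
  | zero => intro x hx; simp [Matrix.det_fin_zero]
  | succ k ih =>
    intro x hx
    set z : Fin k → X := x ∘ Fin.castSucc with hz_def
    have hz : Function.Injective z := hx.comp (Fin.castSucc_injective k)
    set xl := x (Fin.last k) with hxl
    set Q : Matrix (Fin k) (Fin k) ℝ := K.submatrix z z + σ ^ 2 • 1 with hQdef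
    have hQ : Q.PosDef := regPosDef K hK hσ z
    haveI : Invertible Q := hQ.isUnit.invertible
    set B : Matrix (Fin k) (Fin 1) ℝ := fun i _ => K (z i) xl with hB
    set C : Matrix (Fin 1) (Fin k) ℝ := fun _ j => K xl (z j) with hC
    set D : Matrix (Fin 1) (Fin 1) ℝ := fun _ _ => K xl xl + σ ^ 2 with hD
    have hl : ∀ a : Fin 1, finSumFinEquiv (Sum.inr a) = Fin.last k := by
      intro a
      apply Fin.ext
      simp [Fin.natAdd, Fin.last]
    have hM : (K.submatrix x x + σ ^ 2 • (1 : Matrix (Fin (k+1)) (Fin (k+1)) ℝ)).det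
        = (Matrix.fromBlocks Q B C D).det := by
      rw [← Matrix.det_reindex_self finSumFinEquiv.symm]
      congr 1
      ext i j
      cases i with
      | inl i =>
        cases j with
        | inl j =>
          have hcc : (Fin.castAdd 1 i = Fin.castAdd 1 j) ↔ i = j := by
            rw [Fin.ext_iff, Fin.ext_iff, Fin.coe_castAdd, Fin.coe_castAdd]
          simp [Matrix.reindex_apply, Matrix.one_apply, hQdef, hz_def, hcc, Fin.castSucc]
        | inr j =>
          have hne : Fin.castAdd 1 i ≠ Fin.last k := (Fin.castSucc_lt_last i).ne
          rw [Matrix.fromBlocks_apply₁₂]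
          simp [Matrix.reindex_apply, hl, Matrix.one_apply_ne hne, hB, hz_def, hxl,
            Fin.castSucc]
      | inr i =>
        cases j with
        | inl j =>
          have hne : Fin.last k ≠ Fin.castAdd 1 j := (Fin.castSucc_lt_last j).ne'
          rw [Matrix.fromBlocks_apply₂₁]
          simp [Matrix.reindex_apply, hl, Matrix.one_apply_ne hne, hC, hz_def, hxl,
            Fin.castSucc]
        | inr j =>
          rw [Matrix.fromBlocks_apply₂₂]
          simp [Matrix.reindex_apply, hl, Matrix.one_apply, hD, hxl]
    rw [hM, Matrix.det_fromBlocks₁₁, invOf_eq_nonsing_inv, Matrix.det_fin_one]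
    have hCQB : (C * Q⁻¹ * B) 0 0
        = ∑ a : Fin k, ∑ b : Fin k, K xl (z a) * Q⁻¹ a b * K (z b) xl := by
      simp only [Matrix.mul_apply, Finset.sum_mul]
      rw [Finset.sum_comm]
    have hSchur : (D - C * Q⁻¹ * B) 0 0
        = σ ^ 2 + postVar K σ (Finset.image z Finset.univ) xl := by
      rw [Matrix.sub_apply, hCQB, postVar_fin K σ z hz, ← hQdef]
      simp [hD]
      ring
    rw [hSchur, ih z hz, Fin.prod_univ_castSucc]
    congr 1
    · refine Finset.prod_congr rfl fun j _ => ?_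
      simp only [hz_def, img_castSucc, Function.comp_apply]
    · simp only [hz_def, hxl, img_last]

end Aux

/-- Iterated Schur determinant identity: for distinct points `x_1, …, x_k` with
`S = {x_1, …, x_k}`, `det(I + σ⁻² K_S) = ∏_j (1 + σ⁻² σ_{P_{j-1}}²(x_j))` where
`P_{j-1} = {x_1, …, x_{j-1}}`; this shows Pure Exploration is the greedy algorithm
for DPP determinant maximization. -/
theorem det_eq_prod_one_add_postVar
    {X : Type*} [Fintype X] [DecidableEq X]
    (K : Matrix X X ℝ) (hK : K.PosSemidef) (σ : ℝ) (hσ : 0 < σ)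
    (k : ℕ) (x : Fin k → X) (hx : Function.Injective x)
    (S : Finset X) (hS : S = Finset.image x Finset.univ) :
    ((1 : Matrix S S ℝ) +
        (σ ^ 2)⁻¹ • K.submatrix (fun i : S => (i : X)) (fun j : S => (j : X))).det
      = ∏ j : Fin k, (1 + (σ ^ 2)⁻¹ *
          postVar K σ (Finset.image x (Finset.univ.filter (fun i => i < j))) (x j)) := by
  subst hS
  have hσ2 : σ ^ 2 ≠ 0 := by positivity
  have hmat : ((1 : Matrix (Finset.image x Finset.univ : Finset X)
          (Finset.image x Finset.univ : Finset X) ℝ) +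
        (σ ^ 2)⁻¹ • K.submatrix
          (fun i : (Finset.image x Finset.univ : Finset X) => (i : X))
          (fun j : (Finset.image x Finset.univ : Finset X) => (j : X)))
      = (σ ^ 2)⁻¹ • (K.submatrix
          (fun i : (Finset.image x Finset.univ : Finset X) => (i : X))
          (fun j : (Finset.image x Finset.univ : Finset X) => (j : X))
          + σ ^ 2 • (1 : Matrix (Finset.image x Finset.univ : Finset X)
              (Finset.image x Finset.univ : Finset X) ℝ)) := by
    rw [smul_add, smul_smul, inv_mul_cancel₀ hσ2, one_smul, add_comm]
  rw [hmat, Matrix.det_smul, submatrix_coe_eq_reindex K σ x hx, Matrix.det_reindex_self,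
    det_key K hK hσ k x hx]
  have hcard : Fintype.card (Finset.image x Finset.univ : Finset X) = k := by
    rw [Fintype.card_coe, Finset.card_image_of_injective _ hx, Finset.card_univ,
      Fintype.card_fin]
  rw [hcard]
  have hterm : ∀ j : Fin k, 1 + (σ ^ 2)⁻¹ *
      postVar K σ (Finset.image x (Finset.univ.filter (fun i => i < j))) (x j)
      = (σ ^ 2)⁻¹ * (σ ^ 2 +
        postVar K σ (Finset.image x (Finset.univ.filter (fun i => i < j))) (x j)) := by
    intro j; rw [mul_add, inv_mul_cancel₀ hσ2]
  simp only [hterm]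
  rw [Finset.prod_mul_distrib, Finset.prod_const, Finset.card_univ, Fintype.card_fin]
end

section
/- Let K be a real symmetric positive semidefinite matrix indexed by a finite set X, let σ > 0, let A ⊆ A' ⊆ X, and let x ∈ X \ A'. Then σ_{A'}²(x) ≤ σ_A²(x): conditioning on more points can only decrease the posterior variance ('information never hurts' for Gaussian process posterior variances). -/
open Matrix

private lemma quad_le {n : Type*} [Fintype n] [DecidableEq n]
    (M : Matrix n n ℝ) (hM : M.PosDef) (k v : n → ℝ) :
    2 * (v ⬝ᵥ k) - v ⬝ᵥ (M *ᵥ v) ≤ k ⬝ᵥ (M⁻¹ *ᵥ k) := by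
  have hdet : IsUnit M.det := isUnit_iff_ne_zero.2 hM.det_pos.ne'
  have hMinv : M * M⁻¹ = 1 := Matrix.mul_nonsing_inv _ hdet
  have hsymm : Mᵀ = M := hM.isHermitian.eq
  set w : n → ℝ := M⁻¹ *ᵥ k - v with hw
  have h0 : 0 ≤ w ⬝ᵥ (M *ᵥ w) := by
    have := hM.posSemidef.dotProduct_mulVec_nonneg w
    simpa using this
  have hMk : M *ᵥ (M⁻¹ *ᵥ k) = k := by
    rw [Matrix.mulVec_mulVec, hMinv, Matrix.one_mulVec]
  have h1 : (M⁻¹ *ᵥ k) ⬝ᵥ (M *ᵥ v) = v ⬝ᵥ k := by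
    rw [Matrix.dotProduct_mulVec, ← Matrix.mulVec_transpose, hsymm, hMk,
      dotProduct_comm]
  have h2 : (M⁻¹ *ᵥ k) ⬝ᵥ k = k ⬝ᵥ (M⁻¹ *ᵥ k) := dotProduct_comm _ _
  have hexp : w ⬝ᵥ (M *ᵥ w) =
      k ⬝ᵥ (M⁻¹ *ᵥ k) - 2 * (v ⬝ᵥ k) + v ⬝ᵥ (M *ᵥ v) := by
    rw [hw, Matrix.mulVec_sub, sub_dotProduct, dotProduct_sub,
      dotProduct_sub, hMk, h1, h2]
    ring
  linarith [h0, hexp.le, hexp.ge]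

/-- the quadratic value equals the maximum of the quadratic functional -/
private lemma quad_eq {n : Type*} [Fintype n] [DecidableEq n]
    (M : Matrix n n ℝ) (hM : M.PosDef) (k : n → ℝ) :
    k ⬝ᵥ (M⁻¹ *ᵥ k) =
      2 * ((M⁻¹ *ᵥ k) ⬝ᵥ k) - (M⁻¹ *ᵥ k) ⬝ᵥ (M *ᵥ (M⁻¹ *ᵥ k)) := by
  have hdet : IsUnit M.det := isUnit_iff_ne_zero.2 hM.det_pos.ne'
  have hMinv : M * M⁻¹ = 1 := Matrix.mul_nonsing_inv _ hdet
  have hMk : M *ᵥ (M⁻¹ *ᵥ k) = k := by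
    rw [Matrix.mulVec_mulVec, hMinv, Matrix.one_mulVec]
  rw [hMk, dotProduct_comm]
  ring

private lemma sum_extend {X : Type*} [DecidableEq X] {A A' : Finset X}
    (h : A ⊆ A') (f : X → ℝ) (hf : ∀ y, y ∉ A → f y = 0) :
    ∑ a : A', f a = ∑ a : A, f a := by
  rw [Finset.sum_coe_sort, Finset.sum_coe_sort]
  exact (Finset.sum_subset h (fun y _ hy => hf y hy)).symm

/-- "Information never hurts": conditioning on more points can only decrease the
Gaussian process posterior variance. -/
theorem postVar_antitone
    {X : Type*} [Fintype X] [DecidableEq X]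
    (K : Matrix X X ℝ) (hK : K.PosSemidef) (σ : ℝ) (hσ : 0 < σ)
    (A A' : Finset X) (hAA' : A ⊆ A') (x : X) (hx : x ∉ A') :
    postVar K σ A' x ≤ postVar K σ A x := by
  classical
  have hKsym : ∀ i j, K i j = K j i := fun i j => by
    simpa using hK.1.apply j i
  -- matrices
  set MA : Matrix A A ℝ :=
    K.submatrix (fun i : A => (i : X)) (fun j : A => (j : X)) +
      σ ^ 2 • (1 : Matrix A A ℝ) with hMAdef
  set MA' : Matrix A' A' ℝ :=
    K.submatrix (fun i : A' => (i : X)) (fun j : A' => (j : X)) +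
      σ ^ 2 • (1 : Matrix A' A' ℝ) with hMA'def
  have hsmulPD : ∀ (s : Finset X), (σ ^ 2 • (1 : Matrix s s ℝ)).PosDef := by
    intro s
    rw [Matrix.smul_one_eq_diagonal]
    exact Matrix.PosDef.diagonal (fun _ => by positivity)
  have hMA : MA.PosDef :=
    Matrix.PosDef.posSemidef_add (hK.submatrix _) (hsmulPD A)
  have hMA' : MA'.PosDef :=
    Matrix.PosDef.posSemidef_add (hK.submatrix _) (hsmulPD A')
  -- kernel vectors
  set kA : A → ℝ := fun a => K (a : X) x with hkA
  set kA' : A' → ℝ := fun a => K (a : X) x with hkA'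
  -- rewrite postVar sums as dot products
  have hsum : ∀ (s : Finset X) (M : Matrix s s ℝ),
      (∑ a : s, ∑ b : s, K x a * M a b * K b x) =
        (fun a : s => K (a : X) x) ⬝ᵥ (M *ᵥ fun a : s => K (a : X) x) := by
    intro s M
    simp only [dotProduct, Matrix.mulVec, dotProduct, Finset.mul_sum]
    refine Finset.sum_congr rfl fun a _ => Finset.sum_congr rfl fun b _ => ?_
    rw [hKsym x a]
    ring
  rw [postVar, postVar, hsum A, hsum A', ← hMAdef, ← hMA'def]
  have key : kA ⬝ᵥ (MA⁻¹ *ᵥ kA) ≤ kA' ⬝ᵥ (MA'⁻¹ *ᵥ kA') := by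
    -- extend the optimal vector for A by zero to A'
    set vA : A → ℝ := MA⁻¹ *ᵥ kA with hvA
    set V : X → ℝ := fun y => if h : y ∈ A then vA ⟨y, h⟩ else 0 with hV
    set v' : A' → ℝ := fun a => V (a : X) with hv'
    -- entries of the matrices as functions on X
    set N : X → X → ℝ :=
      fun y z => K y z + σ ^ 2 * (if y = z then 1 else 0) with hN
    have hMAe : ∀ (a b : A), MA a b = N (a : X) (b : X) := by
      intro a b
      simp only [hMAdef, hN, Matrix.add_apply, Matrix.submatrix_apply,
        Matrix.smul_apply, Matrix.one_apply, smul_eq_mul]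
      congr 1
      by_cases h : a = b
      · simp [h]
      · rw [if_neg h, if_neg (fun hc => h (Subtype.ext hc))]
    have hMA'e : ∀ (a b : A'), MA' a b = N (a : X) (b : X) := by
      intro a b
      simp only [hMA'def, hN, Matrix.add_apply, Matrix.submatrix_apply,
        Matrix.smul_apply, Matrix.one_apply, smul_eq_mul]
      congr 1
      by_cases h : a = b
      · simp [h]
      · rw [if_neg h, if_neg (fun hc => h (Subtype.ext hc))]
    have hVA : ∀ a : A, V (a : X) = vA a := by
      intro a
      simp only [hV, dif_pos a.2]
    have hVz : ∀ y, y ∉ A → V y = 0 := fun y hy => by simp only [hV, dif_neg hy]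
    -- linear terms agree
    have hlin : v' ⬝ᵥ kA' = vA ⬝ᵥ kA := by
      have h1 : (∑ a : A', V (a : X) * K (a : X) x) =
          ∑ a : A, V (a : X) * K (a : X) x :=
        sum_extend hAA' (fun y => V y * K y x)
          (fun y hy => by show V y * K y x = 0; rw [hVz y hy, zero_mul])
      simp only [dotProduct, hv', hkA', hkA]
      rw [h1]
      exact Finset.sum_congr rfl fun a _ => by rw [hVA a]
    -- quadratic terms agree
    have hquad : v' ⬝ᵥ (MA' *ᵥ v') = vA ⬝ᵥ (MA *ᵥ vA) := by
      simp only [dotProduct, Matrix.mulVec, dotProduct, Finset.mul_sum]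
      have inner_eq : ∀ y : X,
          (∑ b : A', V y * (N y (b : X) * V (b : X))) =
          ∑ b : A, V y * (N y (b : X) * V (b : X)) := by
        intro y
        exact sum_extend hAA' (fun z => V y * (N y z * V z))
          (fun z hz => by show V y * (N y z * V z) = 0; rw [hVz z hz, mul_zero, mul_zero])
      calc (∑ a : A', ∑ b : A', V (a : X) * (MA' a b * V (b : X)))
          = ∑ a : A', (fun y => ∑ b : A, V y * (N y (b : X) * V (b : X))) (a : X) := by
            refine Finset.sum_congr rfl fun a _ => ?_
            show (∑ b : A', V (a : X) * (MA' a b * V (b : X))) =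
              ∑ b : A, V (a : X) * (N (a : X) (b : X) * V (b : X))
            rw [← inner_eq (a : X)]
            exact Finset.sum_congr rfl fun b _ => by rw [hMA'e]
        _ = ∑ a : A, (fun y => ∑ b : A, V y * (N y (b : X) * V (b : X))) (a : X) :=
            sum_extend hAA' (fun y => ∑ b : A, V y * (N y (b : X) * V (b : X)))
              (fun y hy => Finset.sum_eq_zero fun b _ => by
                show V y * (N y (b : X) * V (b : X)) = 0; rw [hVz y hy, zero_mul])
        _ = ∑ a : A, ∑ b : A, vA a * (MA a b * vA b) := by
            refine Finset.sum_congr rfl fun a _ => Finset.sum_congr rfl fun b _ => ?_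
            show V (a : X) * (N (a : X) (b : X) * V (b : X)) = vA a * (MA a b * vA b)
            rw [hVA a, hVA b, hMAe]
    calc kA ⬝ᵥ (MA⁻¹ *ᵥ kA)
        = 2 * (vA ⬝ᵥ kA) - vA ⬝ᵥ (MA *ᵥ vA) := quad_eq MA hMA kA
      _ = 2 * (v' ⬝ᵥ kA') - v' ⬝ᵥ (MA' *ᵥ v') := by rw [hlin, hquad]
      _ ≤ kA' ⬝ᵥ (MA'⁻¹ *ᵥ kA') := quad_le MA' hMA' kA' v'
  linarith [key]
end
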